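/- arXiv:0906.2393 — 2 statements merged into one kernel-verified Lean document; each statement's English description precedes it below -/
import Mathlib

section
/- Let 𝒜 be an abelian category and suppose given an exact sequence 0 → W --u--> P ⊞ Q --γ--> V --π--> U → 0 in 𝒜 (u is a kernel of γ, π is an epimorphism, and the image of γ equals the kernel of π), together with a short exact sequence 0 → Q --ι--> V --ρ--> R → 0 such that ι = γ ∘ inr. Define ℓ := ρ ∘ γ ∘ inl : P → R. Then: (a) the composite fst ∘ u : W → P satisfies ℓ ∘ (fst ∘ u) = 0 and is a kernel of ℓ; and (b) the unique morphism π̄ : R → U with π̄ ∘ ρ = π (which exists since π ∘ ι = 0) is a cokernel of ℓ. -/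
open CategoryTheory Limits

universe v u

/-- Given an exact sequence `0 ⟶ W --u--> P ⊞ Q --γ--> V --π--> U ⟶ 0`
(`u` a kernel of `γ`, `π` an epimorphism, image of `γ` = kernel of `π`) in an abelian
category, together with a short exact sequence `0 ⟶ Q --ι--> V --ρ--> R ⟶ 0` with
`ι = γ ∘ inr`, set `ℓ := ρ ∘ γ ∘ inl : P ⟶ R`.  Then
(a) `fst ∘ u : W ⟶ P` composed with `ℓ` is zero and `fst ∘ u` is a kernel of `ℓ`; and
(b) the unique `π̄ : R ⟶ U` with `π̄ ∘ ρ = π` exists and is a cokernel of `ℓ`. -/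
theorem statement5 {𝒜 : Type u} [Category.{v} 𝒜] [Abelian 𝒜]
    {W P Q V U R : 𝒜}
    (u : W ⟶ P ⊞ Q) (γ : P ⊞ Q ⟶ V) (π : V ⟶ U) (ι : Q ⟶ V) (ρ : V ⟶ R)
    [Mono u] (huγ : u ≫ γ = 0) (hker : IsLimit (KernelFork.ofι u huγ))
    [Epi π] (hγπ : γ ≫ π = 0) (hexact : (ShortComplex.mk γ π hγπ).Exact)
    [Mono ι] [Epi ρ] (hιρ : ι ≫ ρ = 0) (hkerι : IsLimit (KernelFork.ofι ι hιρ))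
    (hι : ι = biprod.inr ≫ γ) :
    (∃ (w : (u ≫ biprod.fst) ≫ (biprod.inl ≫ γ ≫ ρ) = 0),
        Nonempty (IsLimit (KernelFork.ofι (u ≫ biprod.fst) w))) ∧
    (∃! π' : R ⟶ U, ρ ≫ π' = π) ∧
    (∀ π' : R ⟶ U, ρ ≫ π' = π →
      ∃ (w' : (biprod.inl ≫ γ ≫ ρ) ≫ π' = 0),
        Nonempty (IsColimit (CokernelCofork.ofπ π' w'))) := by
  have hinr : biprod.inr ≫ γ ≫ ρ = 0 := by
    rw [← Category.assoc, ← hι, hιρ]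
  have hfstinl : (biprod.fst ≫ biprod.inl : P ⊞ Q ⟶ P ⊞ Q)
      = 𝟙 _ - biprod.snd ≫ biprod.inr := by
    rw [← biprod.total]; abel
  have w : (u ≫ biprod.fst) ≫ (biprod.inl ≫ γ ≫ ρ) = 0 := by
    calc (u ≫ biprod.fst) ≫ (biprod.inl ≫ γ ≫ ρ)
        = u ≫ (biprod.fst ≫ biprod.inl) ≫ (γ ≫ ρ) := by simp
      _ = u ≫ (𝟙 _ - biprod.snd ≫ biprod.inr) ≫ (γ ≫ ρ) := by rw [hfstinl]
      _ = u ≫ (γ ≫ ρ) - u ≫ biprod.snd ≫ biprod.inr ≫ (γ ≫ ρ) := by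
          simp [Preadditive.sub_comp, Preadditive.comp_sub]
      _ = 0 := by
          rw [show biprod.inr ≫ (γ ≫ ρ) = 0 from hinr,
            show u ≫ (γ ≫ ρ) = (u ≫ γ) ≫ ρ from (Category.assoc _ _ _).symm, huγ]
          simp
  -- `u ≫ fst` is mono
  have hmono : Mono (u ≫ biprod.fst) := by
    refine Preadditive.mono_of_cancel_zero _ (fun {X} m hm => ?_)
    have h2 : m ≫ u ≫ (biprod.fst ≫ biprod.inl) ≫ γ = 0 := by
      rw [show u ≫ (biprod.fst ≫ biprod.inl) ≫ γ
          = (u ≫ biprod.fst) ≫ biprod.inl ≫ γ by simp, ← Category.assoc, hm, zero_comp]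
    have h1 : m ≫ u ≫ (biprod.snd ≫ biprod.inr) ≫ γ = 0 := by
      have htot : m ≫ u ≫ (biprod.fst ≫ biprod.inl + biprod.snd ≫ biprod.inr) ≫ γ = 0 := by
        rw [biprod.total, Category.id_comp, huγ, comp_zero]
      rw [Preadditive.add_comp, Preadditive.comp_add, Preadditive.comp_add, h2, zero_add] at htot
      exact htot
    have h3 : m ≫ u ≫ biprod.snd = 0 := by
      rw [← cancel_mono ι, hι, zero_comp]
      simpa using h1
    have h4 : m ≫ u = 0 := by
      calc m ≫ u = m ≫ u ≫ 𝟙 _ := by simp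
        _ = m ≫ u ≫ (biprod.fst ≫ biprod.inl + biprod.snd ≫ biprod.inr) := by
            rw [biprod.total]
        _ = (m ≫ u ≫ biprod.fst) ≫ biprod.inl + (m ≫ u ≫ biprod.snd) ≫ biprod.inr := by
            simp only [Preadditive.comp_add, Category.assoc]
        _ = 0 := by rw [hm, h3]; simp
    rw [← cancel_mono u, zero_comp]
    exact h4
  refine ⟨⟨w, ⟨?_⟩⟩, ?_, ?_⟩
  · -- `u ≫ fst` is a kernel of ℓ
    exact KernelFork.IsLimit.ofι' (hi := hmono) _ w (fun {X} g hg => by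
      have hg' : (g ≫ biprod.inl ≫ γ) ≫ ρ = 0 := by simpa using hg
      obtain ⟨q, hq⟩ : {l : X ⟶ Q // l ≫ ι = g ≫ biprod.inl ≫ γ} :=
        ⟨(KernelFork.IsLimit.lift' hkerι (g ≫ biprod.inl ≫ γ) hg').1,
          by simpa using (KernelFork.IsLimit.lift' hkerι (g ≫ biprod.inl ≫ γ) hg').2⟩
      have hsub : (g ≫ biprod.inl - q ≫ biprod.inr) ≫ γ = 0 := by
        have hqγ : q ≫ biprod.inr ≫ γ = g ≫ biprod.inl ≫ γ := by rw [← hι]; exact hq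
        rw [Preadditive.sub_comp, Category.assoc, Category.assoc, hqγ, sub_self]
      obtain ⟨l, hl⟩ : {l : X ⟶ W // l ≫ u = g ≫ biprod.inl - q ≫ biprod.inr} :=
        ⟨(KernelFork.IsLimit.lift' hker _ hsub).1,
          by simpa using (KernelFork.IsLimit.lift' hker _ hsub).2⟩
      refine ⟨l, ?_⟩
      rw [← Category.assoc, hl]
      simp)
  · -- existence and uniqueness of π'
    have hcoρ : IsColimit (CokernelCofork.ofπ ρ hιρ) :=
      Abelian.epiIsCokernelOfKernel _ hkerι
    have hιπ : ι ≫ π = 0 := by rw [hι, Category.assoc, hγπ]; simp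
    obtain ⟨π', hπ'⟩ : {d : R ⟶ U // ρ ≫ d = π} :=
      ⟨(CokernelCofork.IsColimit.desc' hcoρ π hιπ).1,
        by simpa using (CokernelCofork.IsColimit.desc' hcoρ π hιπ).2⟩
    exact ⟨π', hπ', fun y hy => by rw [← cancel_epi ρ, hπ', hy]⟩
  · -- any π' with ρ ≫ π' = π is a cokernel of ℓ
    intro π' hπ'
    have hγρπ' : γ ≫ ρ ≫ π' = 0 := by rw [hπ']; exact hγπ
    have w' : (biprod.inl ≫ γ ≫ ρ) ≫ π' = 0 := by
      simp only [Category.assoc]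
      rw [hγρπ', comp_zero]
    have hepi : Epi π' := by
      have : Epi (ρ ≫ π') := by rw [hπ']; infer_instance
      exact epi_of_epi ρ π'
    have hcoγ : IsColimit (CokernelCofork.ofπ π hγπ) := by
      have : Epi (ShortComplex.mk γ π hγπ).g := ‹Epi π›
      exact hexact.gIsCokernel
    refine ⟨w', ⟨CokernelCofork.IsColimit.ofπ' (hp := hepi) _ w' (fun {Z} k hk => ?_)⟩⟩
    have hinrk : biprod.inr ≫ γ ≫ ρ ≫ k = 0 := by
      rw [show γ ≫ ρ ≫ k = (γ ≫ ρ) ≫ k by simp, ← Category.assoc, hinr]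
      simp
    have hγρk : γ ≫ ρ ≫ k = 0 := by
      apply biprod.hom_ext' <;> simp only [comp_zero]
      · simpa [Category.assoc] using hk
      · simpa [Category.assoc] using hinrk
    obtain ⟨s, hs⟩ : {d : U ⟶ Z // π ≫ d = ρ ≫ k} :=
      ⟨(CokernelCofork.IsColimit.desc' hcoγ (ρ ≫ k) hγρk).1,
        by simpa using (CokernelCofork.IsColimit.desc' hcoγ (ρ ≫ k) hγρk).2⟩
    refine ⟨s, ?_⟩
    rw [← cancel_epi ρ, ← Category.assoc, hπ', hs]
end

section
/- Let 𝒜 be an abelian category. Let A• : A^{-2} --δ_A--> A^{-1} --λ_A--> A^0 and B• : B^{-2} --δ_B--> B^{-1} --λ_B--> B^0 be cochain complexes concentrated in degrees [-2,0], and let σA• = [A^{-2} → A^{-1} → 0] and σB• = [B^{-2} → B^{-1} → 0] denote their brutal truncations below degree 0 (so H^{-2}(σA•) = ker δ_A and H^{-1}(σA•) = coker δ_A). Let E• be a complex concentrated in degrees [-1,0] and 0 → E• → M• → σA• ⊞ σB• → 0 a short exact sequence of cochain complexes, with connecting homomorphisms ∂ : H^{-2}(σA• ⊞ σB•) → H^{-1}(E•)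 and ∂' : H^{-1}(σA• ⊞ σB•) → H^0(E•) in the long exact cohomology sequence. Assume: (i) the composite ∂ ∘ inr : H^{-2}(σB•) → H^{-1}(E•) is an isomorphism; (ii) there is a short exact sequence 0 → H^{-1}(σB•) --∂' ∘ inr--> H^0(E•) --ρ--> A^0 → 0; and (iii) ρ ∘ ∂' ∘ inl : coker δ_A → A^0 equals the morphism λ̄_A induced by λ_A on coker δ_A. Then: (a) the composite H^{-2}(M•) → H^{-2}(σA• ⊞ σB•) --fst--> ker δ_A is an isomorphism, so H^{-2}(M•) ≅ H^{-2}(A•); (b) the composite H^{-1}(M•) → H^{-1}(σA• ⊞ σB•) --fst--> coker δ_A is a kernel of λ̄_A, so H^{-1}(M•) ≅ H^{-1}(A•) = ker λ_A / im δ_A; and (c) the unique morphism A^0 → H^0(M•) whose composite with ρ is the long-exact-sequence map H^0(E•) → H^0(M•) is a cokernel of λ̄_A, so H^0(M•) ≅ H^0(A•) = coker λ_A. -/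
open CategoryTheory Limits HomologicalComplex ZeroObject

universe v u

variable {𝒜 : Type u} [Category.{v} 𝒜] [Abelian 𝒜]

/-- The brutal (stupid) truncation of a cochain complex below degree `0`: it keeps the
terms in (strictly) negative degrees and replaces all other terms by `0`.  For a complex
`A•` concentrated in degrees `[-2,0]` this is the complex `[A^{-2} → A^{-1} → 0]`. -/
noncomputable def brutalTrunc (A : CochainComplex 𝒜 ℤ) : CochainComplex 𝒜 ℤ where
  X i := if i < 0 then A.X i else 0
  d i j :=
    if hi : i < 0 then
      if hj : j < 0 then
        eqToHom (if_pos hi) ≫ A.d i j ≫ eqToHom (if_pos hj).symm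
      else 0
    else 0
  shape i j hij := by
    try dsimp only
    split_ifs with hi
    · rw [A.shape i j hij]; simp
    · rfl
  d_comp_d' i j k hij hjk := by
    try dsimp only
    by_cases hi : i < 0 <;> by_cases hj : j < 0 <;> by_cases hk : k < 0 <;>
      simp [hi, hj, hk]

lemma brutalTrunc_X_eq (A : CochainComplex 𝒜 ℤ) {i : ℤ} (hi : i < 0) :
    (brutalTrunc A).X i = A.X i :=
  if_pos hi

/-- The morphism `λ̄_A : coker δ_A ⟶ A^0` induced by `λ_A : A^{-1} ⟶ A^0` for a complex
`A•` concentrated in degrees `[-2,0]`, where `δ_A = d^{-2}` and `λ_A = d^{-1}`. -/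
noncomputable def lambdaBar (A : CochainComplex 𝒜 ℤ) :
    cokernel (A.d (-2) (-1)) ⟶ A.X 0 :=
  cokernel.desc _ (A.d (-1) 0) (A.d_comp_d _ _ _)

/-! In each degree the long exact cohomology sequence contains an exact piece
`H(M•) ⟶ P ⊞ Q ⟶ Z` whose middle term is a biproduct, with `P` the cohomology of `σA•` and
`Q` that of `σB•`, and the hypotheses describe the restriction of the outgoing map to `Q`: it is
an isomorphism in degree `-2` and a kernel of `ρ` in degree `-1`. Projecting to `P` then
identifies `H^{-2}(M•)` with `P`, `H^{-1}(M•)` with the kernel of the restriction to `P`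
followed by `ρ` (which is `λ̄_A`), and, dually, `H^0(M•)` with its cokernel. -/

namespace CategoryTheory.Limits

variable {C : Type*} [Category* C] [Preadditive C]

@[simps]
def BinaryBicone.ofIsoFst {P P' Q : C} (c : BinaryBicone P Q) (e : P ≅ P') :
    BinaryBicone P' Q where
  pt := c.pt
  fst := c.fst ≫ e.hom
  snd := c.snd
  inl := e.inv ≫ c.inl
  inr := c.inr

namespace BinaryBicone.IsBilimit

variable {X Y Z W P Q : C} {c : BinaryBicone P Q} {m : X ⟶ c.pt} {d : c.pt ⟶ Z}

theorem comp_fst_inl_add_comp_snd_inr (hc : c.IsBilimit) {T : C} (t : T ⟶ c.pt) :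
    (t ≫ c.fst) ≫ c.inl + (t ≫ c.snd) ≫ c.inr = t := by
  rw [Category.assoc, Category.assoc, ← Preadditive.comp_add, IsBilimit.binary_total hc,
    Category.comp_id]

def ofIsoFst {P' : C} (hc : c.IsBilimit) (e : P ≅ P') : (c.ofIsoFst e).IsBilimit :=
  isBinaryBilimitOfTotal _ (by simp [BinaryBicone.ofIsoFst]; exact IsBilimit.binary_total hc)

theorem mono_comp_fst (hc : c.IsBilimit) [Mono m] (hmd : m ≫ d = 0) [Mono (c.inr ≫ d)] :
    Mono (m ≫ c.fst) := by
  refine (Preadditive.mono_iff_cancel_zero _).2 fun T t ht => ?_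
  have hm : (t ≫ m ≫ c.snd) ≫ c.inr = t ≫ m := by
    simpa [reassoc_of% ht] using hc.comp_fst_inl_add_comp_snd_inr (t ≫ m)
  have hsnd : t ≫ m ≫ c.snd = 0 := by
    rw [← cancel_mono (c.inr ≫ d), zero_comp, ← Category.assoc, hm, Category.assoc, hmd,
      comp_zero]
  rw [← cancel_mono m, zero_comp, ← hm, hsnd, zero_comp]

theorem isIso_comp_fst (hc : c.IsBilimit) {hmd : m ≫ d = 0}
    (hm : IsLimit (KernelFork.ofι m hmd)) [hinr : IsIso (c.inr ≫ d)] : IsIso (m ≫ c.fst) := by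
  have : Mono m := Fork.IsLimit.mono hm
  have := hc.mono_comp_fst hmd
  -- correcting `c.inl` by a `Q`-component moves it into the kernel of `d`
  have hsd : (c.inl - (c.inl ≫ d ≫ inv (c.inr ≫ d)) ≫ c.inr) ≫ d = 0 := by simp
  obtain ⟨s, hs : s ≫ m = _⟩ := KernelFork.IsLimit.lift' hm _ hsd
  have : IsSplitEpi (m ≫ c.fst) := ⟨⟨⟨s, by simp [reassoc_of% hs]⟩⟩⟩
  exact isIso_of_mono_of_isSplitEpi _

theorem exists_isLimit_comp_fst (hc : c.IsBilimit) {hmd : m ≫ d = 0}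
    (hm : IsLimit (KernelFork.ofι m hmd)) {r : Z ⟶ W} {hr : (c.inr ≫ d) ≫ r = 0}
    (hk : IsLimit (KernelFork.ofι (c.inr ≫ d) hr)) {l : P ⟶ W} (hl : c.inl ≫ d ≫ r = l) :
    ∃ w : (m ≫ c.fst) ≫ l = 0, Nonempty (IsLimit (KernelFork.ofι (m ≫ c.fst) w)) := by
  subst hl
  have : Mono m := Fork.IsLimit.mono hm
  have : Mono (c.inr ≫ d) := Fork.IsLimit.mono hk
  have := hc.mono_comp_fst hmd
  have hr' : c.inr ≫ d ≫ r = 0 := by simpa using hr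
  have w : (m ≫ c.fst) ≫ c.inl ≫ d ≫ r = 0 := by
    rw [← Category.assoc, ← add_sub_cancel_right ((m ≫ c.fst) ≫ c.inl) ((m ≫ c.snd) ≫ c.inr),
      hc.comp_fst_inl_add_comp_snd_inr]
    simp [reassoc_of% hmd, hr']
  refine ⟨w, ⟨KernelFork.IsLimit.ofι' _ _ fun {T} k hk' => ?_⟩⟩
  -- as in `isIso_comp_fst`, with the `Q`-component `b` now provided by the kernel property
  obtain ⟨b, hb : b ≫ c.inr ≫ d = k ≫ c.inl ≫ d⟩ :=
    KernelFork.IsLimit.lift' hk (k ≫ c.inl ≫ d) (by simpa using hk')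
  obtain ⟨a, ha : a ≫ m = k ≫ c.inl - b ≫ c.inr⟩ :=
    KernelFork.IsLimit.lift' hm (k ≫ c.inl - b ≫ c.inr) (by simp [hb])
  exact ⟨a, by simp [reassoc_of% ha]⟩

theorem exists_isColimit_of_fac (hc : c.IsBilimit) {p : Z ⟶ Y} {hdp : d ≫ p = 0}
    (hp : IsColimit (CokernelCofork.ofπ p hdp)) {r : Z ⟶ W} [Epi r]
    (hr : (c.inr ≫ d) ≫ r = 0) {l : P ⟶ W} (hl : c.inl ≫ d ≫ r = l) {u : W ⟶ Y}
    (hu : r ≫ u = p) :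
    ∃ w : l ≫ u = 0, Nonempty (IsColimit (CokernelCofork.ofπ u w)) := by
  subst hl hu
  have : Epi (r ≫ u) := Cofork.IsColimit.epi hp
  have : Epi u := epi_of_epi r u
  have hr' : c.inr ≫ d ≫ r = 0 := by simpa using hr
  refine ⟨by simp [hdp], ⟨CokernelCofork.IsColimit.ofπ' _ _ fun {T} k hk => ?_⟩⟩
  have hdk : d ≫ r ≫ k = 0 := by
    rw [← Category.id_comp d, ← IsBilimit.binary_total hc]
    simp only [Category.assoc] at hk
    simp [reassoc_of% hr', hk]
  obtain ⟨v, hv⟩ := CokernelCofork.IsColimit.desc' hp (r ≫ k) hdk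
  exact ⟨v, by rw [← cancel_epi r, ← hv]; simp⟩

end BinaryBicone.IsBilimit

end CategoryTheory.Limits

lemma isZero_brutalTrunc_X (A : CochainComplex 𝒜 ℤ) {i : ℤ} (hi : 0 ≤ i) :
    IsZero ((brutalTrunc A).X i) := by
  simpa [brutalTrunc, not_lt.2 hi] using isZero_zero 𝒜

theorem statement7
    (A B E M : CochainComplex 𝒜 ℤ)
    (hE : ∀ i : ℤ, i ≠ -1 → i ≠ 0 → IsZero (E.X i))
    (f : E ⟶ M) (g : M ⟶ brutalTrunc A ⊞ brutalTrunc B) (hfg : f ≫ g = 0)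
    (hS : (ShortComplex.mk f g hfg).ShortExact)
    -- the canonical identification `H^{-2}(σA•) ≅ ker δ_A`
    (e₂ : (brutalTrunc A).homology (-2) ≅ kernel (A.d (-2) (-1)))
    -- the canonical identification `H^{-1}(σA•) ≅ coker δ_A`
    (e₁ : (brutalTrunc A).homology (-1) ≅ cokernel (A.d (-2) (-1)))
    (ρ : E.homology 0 ⟶ A.X 0)
    -- (i) `∂ ∘ inr : H^{-2}(σB•) ⟶ H^{-1}(E•)` is an isomorphism
    (hi : IsIso (homologyMap (biprod.inr : brutalTrunc B ⟶ brutalTrunc A ⊞ brutalTrunc B)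
        (-2) ≫ hS.δ (-2) (-1) (by decide)))
    -- (ii) `0 ⟶ H^{-1}(σB•) ⟶ H^0(E•) ⟶ A^0 ⟶ 0` is short exact
    (hii₀ : (homologyMap (biprod.inr : brutalTrunc B ⟶ brutalTrunc A ⊞ brutalTrunc B) (-1)
        ≫ hS.δ (-1) 0 (by decide)) ≫ ρ = 0)
    (hii₂ : Epi ρ)
    (hii₃ : IsLimit (KernelFork.ofι _ hii₀))
    -- (iii) `ρ ∘ ∂' ∘ inl = λ̄_A`
    (hiii : e₁.inv ≫
        homologyMap (biprod.inl : brutalTrunc A ⟶ brutalTrunc A ⊞ brutalTrunc B) (-1) ≫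
        hS.δ (-1) 0 (by decide) ≫ ρ = lambdaBar A) :
    -- (a)
    IsIso (homologyMap g (-2) ≫
        homologyMap (biprod.fst : brutalTrunc A ⊞ brutalTrunc B ⟶ brutalTrunc A) (-2) ≫
        e₂.hom) ∧
    -- (b)
    (∃ (w : (homologyMap g (-1) ≫
        homologyMap (biprod.fst : brutalTrunc A ⊞ brutalTrunc B ⟶ brutalTrunc A) (-1) ≫
        e₁.hom) ≫ lambdaBar A = 0),
      Nonempty (IsLimit (KernelFork.ofι (homologyMap g (-1) ≫
        homologyMap (biprod.fst : brutalTrunc A ⊞ brutalTrunc B ⟶ brutalTrunc A) (-1) ≫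
        e₁.hom) w))) ∧
    -- (c)
    ((∃! u : A.X 0 ⟶ M.homology 0, ρ ≫ u = homologyMap f 0) ∧
      ∀ u : A.X 0 ⟶ M.homology 0, ρ ≫ u = homologyMap f 0 →
        ∃ (w' : lambdaBar A ≫ u = 0),
          Nonempty (IsColimit (CokernelCofork.ofπ u w'))) := by
  have hE₂ : IsZero (E.homology (-2)) :=
    ShortComplex.isZero_homology_of_isZero_X₂ _ (hE (-2) (by decide) (by decide))
  have hT₀ : IsZero ((brutalTrunc A ⊞ brutalTrunc B).homology 0) :=
    ShortComplex.isZero_homology_of_isZero_X₂ _ <|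
      ((biprod_isZero_iff _ _).2 ⟨isZero_brutalTrunc_X A le_rfl,
        isZero_brutalTrunc_X B le_rfl⟩).of_iso (biprodXIso _ _ 0)
  have : Mono (homologyMap g (-2)) := (hS.homology_exact₂ (-2)).mono_g (hE₂.eq_of_src _ _)
  have : Epi (hS.δ (-2) (-1) (by decide)) := epi_of_epi (homologyMap biprod.inr (-2)) _
  have : Mono (homologyMap g (-1)) := (hS.homology_exact₂ (-1)).mono_g <|
    (cancel_epi (hS.δ (-2) (-1) _)).1 ((hS.δ_comp _ _ _).trans comp_zero.symm)
  have : Epi (homologyMap f 0) := (hS.homology_exact₂ 0).epi_f (hT₀.eq_of_tgt _ _)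
  have hc (i : ℤ) {P : 𝒜} (e : (brutalTrunc A).homology i ≅ P) :=
    have := preservesBinaryBiproducts_of_preservesBiproducts (homologyFunctor 𝒜 (.up ℤ) i)
    (isBinaryBilimitOfPreserves (homologyFunctor 𝒜 _ i)
      (BinaryBiproduct.isBilimit (brutalTrunc A) (brutalTrunc B))).ofIsoFst e
  have hlam := (Category.assoc _ _ _).trans hiii
  exact ⟨(hc (-2) e₂).isIso_comp_fst (hS.homology_exact₃ (-2) (-1) (by decide)).fIsKernel
      (hinr := hi),
    (hc (-1) e₁).exists_isLimit_comp_fst (hS.homology_exact₃ (-1) 0 (by decide)).fIsKernel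
      hii₃ hlam,
    Cofork.IsColimit.existsUnique (Abelian.epiIsCokernelOfKernel _ hii₃) _
      (by simp [hS.δ_comp]),
    fun u hu => (hc (-1) e₁).exists_isColimit_of_fac
      (hS.homology_exact₁ (-1) 0 (by decide)).gIsCokernel hii₀ hlam hu⟩
end
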